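/- For every integer d ≥ 1, all m, l ∈ ℤ^d and every x ∈ ℝ^d, one has B(s_m − c_l)(x) + B(c_m − s_l)(x) − B(s_m)(x) − B(s_l)(x) − B(c_m)(x) − B(c_l)(x) = 2⟨m,l⟩·sin⟨x, m+l⟩, where ⟨m,l⟩ = Σ_{j=1}^d m_j l_j. In particular, if ⟨m,l⟩ ≠ 0 then sin⟨·, m+l⟩ is a scalar multiple of this combination of values of B on elements of the span of {s_m, s_l, c_m, c_l}. -/

import Mathlib

open Real MeasureTheory

/-- ⟨x, m⟩ = ∑ x_j m_j for x ∈ ℝ^d, m ∈ ℤ^d. -/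
noncomputable def ip (d : ℕ) (x : Fin d → ℝ) (m : Fin d → ℤ) : ℝ :=
  ∑ j, x j * (m j : ℝ)

/-- Integer inner product on ℤ^d. -/
def ipZ (d : ℕ) (m l : Fin d → ℤ) : ℤ := ∑ j, m j * l j

/-- c_m(x) = cos⟨x,m⟩. -/
noncomputable def cmap (d : ℕ) (m : Fin d → ℤ) : (Fin d → ℝ) → ℝ :=
  fun x => Real.cos (ip d x m)

/-- s_m(x) = sin⟨x,m⟩. -/
noncomputable def smap (d : ℕ) (m : Fin d → ℤ) : (Fin d → ℝ) → ℝ :=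
  fun x => Real.sin (ip d x m)

/-- B(φ)(x) = ∑_j (∂_{x_j} φ(x))². -/
noncomputable def Bop (d : ℕ) (φ : (Fin d → ℝ) → ℝ) : (Fin d → ℝ) → ℝ :=
  fun x => ∑ j, (fderiv ℝ φ x (Pi.single j 1)) ^ 2

/-- Functions representable as θ₀ − ∑_{j=1}^n B(θ_j) with θ's in H, n ≥ 1. -/
noncomputable def BRep (d : ℕ) (H : Set ((Fin d → ℝ) → ℝ)) : Set ((Fin d → ℝ) → ℝ) :=
  { f | ∃ n : ℕ, 1 ≤ n ∧ ∃ θ₀ ∈ H, ∃ θ : Fin n → (Fin d → ℝ) → ℝ,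
      (∀ j, θ j ∈ H) ∧ f = θ₀ - ∑ j, Bop d (θ j) }

/-- F(H): f such that both f and −f are representable. -/
noncomputable def Fop (d : ℕ) (H : Set ((Fin d → ℝ) → ℝ)) : Set ((Fin d → ℝ) → ℝ) :=
  { f | f ∈ BRep d H ∧ -f ∈ BRep d H }

/-- H(I): span of {1} ∪ {c_k, s_k : k ∈ I}. -/
noncomputable def H0 (d : ℕ) (I : Finset (Fin d → ℤ)) : Set ((Fin d → ℝ) → ℝ) :=
  ↑(Submodule.span ℝ
      ({fun _ => (1:ℝ)} ∪ ⋃ k ∈ (I : Set (Fin d → ℤ)), {cmap d k, smap d k}))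

noncomputable def HSeq (d : ℕ) (I : Finset (Fin d → ℤ)) : ℕ → Set ((Fin d → ℝ) → ℝ)
  | 0 => H0 d I
  | j + 1 => Fop d (HSeq d I j)

/-- H_∞(I) = ⋃_j H_j(I). -/
noncomputable def Hinf (d : ℕ) (I : Finset (Fin d → ℤ)) : Set ((Fin d → ℝ) → ℝ) :=
  ⋃ j, HSeq d I j

/-- I generates ℤ^d over ℤ. -/
def IsGenerator (d : ℕ) (I : Finset (Fin d → ℤ)) : Prop :=
  ∀ n : Fin d → ℤ, ∃ a : (Fin d → ℤ) → ℤ, n = ∑ k ∈ I, a k • k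

/-- Connectedness condition of Proposition 2.5. -/
def ConnectedSet (d : ℕ) (I : Finset (Fin d → ℤ)) : Prop :=
  ∀ l ∈ I, ∀ m ∈ I, ∃ k : ℕ, ∃ n : Fin (k + 1) → (Fin d → ℤ),
    (∀ j, n j ∈ I) ∧ ipZ d l (n 0) ≠ 0 ∧
    (∀ j : Fin k, ipZ d (n j.castSucc) (n j.succ) ≠ 0) ∧
    ipZ d (n (Fin.last k)) m ≠ 0

/-- (2πℤ^d)-periodicity for real-valued functions. -/
def Periodic2pi (d : ℕ) (f : (Fin d → ℝ) → ℝ) : Prop :=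
  ∀ (x : Fin d → ℝ) (k : Fin d → ℤ), f (x + fun j => 2 * Real.pi * (k j : ℝ)) = f x

/-
The operator `B` is the quadratic form `φ ↦ |∇φ|²`, so the combination on the left is a sum of two
polarisations: `B(s_m - c_l) - B(s_m) - B(c_l) = -2 ∇s_m · ∇c_l = 2⟨m,l⟩ cos⟨x,m⟩ sin⟨x,l⟩`, and
symmetrically `B(c_m - s_l) - B(c_m) - B(s_l) = 2⟨m,l⟩ sin⟨x,m⟩ cos⟨x,l⟩`. Their sum is
`2⟨m,l⟩ sin(⟨x,m⟩ + ⟨x,l⟩)` by the addition formula.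
-/

noncomputable def ipCLM (d : ℕ) (m : Fin d → ℤ) : (Fin d → ℝ) →L[ℝ] ℝ :=
  ∑ j, (m j : ℝ) • ContinuousLinearMap.proj j

lemma ipCLM_apply (d : ℕ) (m : Fin d → ℤ) (v : Fin d → ℝ) : ipCLM d m v = ip d v m := by
  simp [ipCLM, ip, mul_comm]

lemma ipCLM_single (d : ℕ) (m : Fin d → ℤ) (j : Fin d) :
    ipCLM d m (Pi.single j 1) = m j := by
  simp [ipCLM_apply, ip, Pi.single_apply]

lemma ip_add (d : ℕ) (x : Fin d → ℝ) (m l : Fin d → ℤ) :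
    ip d x (m + l) = ip d x m + ip d x l := by
  simp [ip, mul_add, Finset.sum_add_distrib]

lemma ipZ_comm (d : ℕ) (m l : Fin d → ℤ) : ipZ d m l = ipZ d l m := by
  simp only [ipZ, mul_comm]

lemma hasFDerivAt_ip (d : ℕ) (m : Fin d → ℤ) (x : Fin d → ℝ) :
    HasFDerivAt (fun y => ip d y m) (ipCLM d m) x := by
  rw [show (fun y => ip d y m) = ipCLM d m from funext fun y => (ipCLM_apply d m y).symm]
  exact (ipCLM d m).hasFDerivAt

lemma hasFDerivAt_smap (d : ℕ) (m : Fin d → ℤ) (x : Fin d → ℝ) :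
    HasFDerivAt (smap d m) (cos (ip d x m) • ipCLM d m) x :=
  (hasFDerivAt_ip d m x).sin

lemma hasFDerivAt_cmap (d : ℕ) (m : Fin d → ℤ) (x : Fin d → ℝ) :
    HasFDerivAt (cmap d m) (-sin (ip d x m) • ipCLM d m) x :=
  (hasFDerivAt_ip d m x).cos

lemma fderiv_smap_single (d : ℕ) (m : Fin d → ℤ) (x : Fin d → ℝ) (j : Fin d) :
    fderiv ℝ (smap d m) x (Pi.single j 1) = cos (ip d x m) * m j := by
  simp [(hasFDerivAt_smap d m x).fderiv, ipCLM_single]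

lemma fderiv_cmap_single (d : ℕ) (m : Fin d → ℤ) (x : Fin d → ℝ) (j : Fin d) :
    fderiv ℝ (cmap d m) x (Pi.single j 1) = -sin (ip d x m) * m j := by
  simp [(hasFDerivAt_cmap d m x).fderiv, ipCLM_single]

lemma Bop_sub_apply (d : ℕ) {f g : (Fin d → ℝ) → ℝ} {x : Fin d → ℝ}
    (hf : DifferentiableAt ℝ f x) (hg : DifferentiableAt ℝ g x) :
    Bop d (f - g) x = Bop d f x + Bop d g x
      - 2 * ∑ j, fderiv ℝ f x (Pi.single j 1) * fderiv ℝ g x (Pi.single j 1) := by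
  simp only [Bop, fderiv_sub hf hg, sub_apply, sub_sq, Finset.mul_sum,
    Finset.sum_add_distrib, Finset.sum_sub_distrib]
  ring_nf

lemma sum_fderiv_smap_mul_fderiv_cmap (d : ℕ) (m l : Fin d → ℤ) (x : Fin d → ℝ) :
    ∑ j, fderiv ℝ (smap d m) x (Pi.single j 1) * fderiv ℝ (cmap d l) x (Pi.single j 1)
      = -(ipZ d m l * (cos (ip d x m) * sin (ip d x l))) := by
  simp only [fderiv_smap_single, fderiv_cmap_single, ipZ, Int.cast_sum, Int.cast_mul,
    Finset.sum_mul, ← Finset.sum_neg_distrib]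
  exact Finset.sum_congr rfl fun j _ => by ring

theorem stmt3_general (d : ℕ) (m l : Fin d → ℤ) :
    (∀ x : Fin d → ℝ,
      Bop d (smap d m - cmap d l) x + Bop d (cmap d m - smap d l) x
        - Bop d (smap d m) x - Bop d (smap d l) x - Bop d (cmap d m) x
        - Bop d (cmap d l) x
        = 2 * (ipZ d m l : ℝ) * Real.sin (ip d x (m + l))) ∧
    ((ipZ d m l : ℤ) ≠ 0 → ∃ c : ℝ,
      smap d (m + l)
        = c • (Bop d (smap d m - cmap d l) + Bop d (cmap d m - smap d l)
            - Bop d (smap d m) - Bop d (smap d l) - Bop d (cmap d m)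
            - Bop d (cmap d l))) := by
  have identity : ∀ x : Fin d → ℝ,
      Bop d (smap d m - cmap d l) x + Bop d (cmap d m - smap d l) x
        - Bop d (smap d m) x - Bop d (smap d l) x - Bop d (cmap d m) x
        - Bop d (cmap d l) x
        = 2 * (ipZ d m l : ℝ) * sin (ip d x (m + l)) := by
    intro x
    have hs (k) := (hasFDerivAt_smap d k x).differentiableAt
    have hc (k) := (hasFDerivAt_cmap d k x).differentiableAt
    rw [Bop_sub_apply d (hs m) (hc l), Bop_sub_apply d (hc m) (hs l),
      sum_fderiv_smap_mul_fderiv_cmap, Finset.sum_congr rfl fun j _ => mul_comm _ _,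
      sum_fderiv_smap_mul_fderiv_cmap, ipZ_comm d l m, ip_add, sin_add]
    ring
  refine ⟨identity, fun h => ⟨(2 * ipZ d m l : ℝ)⁻¹, funext fun x => ?_⟩⟩
  have h2 : (2 * ipZ d m l : ℝ) ≠ 0 := by exact_mod_cast mul_ne_zero two_ne_zero h
  simp only [Pi.smul_apply, Pi.sub_apply, Pi.add_apply, smul_eq_mul]
  rw [identity x, inv_mul_cancel_left₀ h2, smap]

/-- B(s_m−c_l) + B(c_m−s_l) − B(s_m) − B(s_l) − B(c_m) − B(c_l)
= 2⟨m,l⟩ sin⟨·, m+l⟩; hence for ⟨m,l⟩ ≠ 0, sin⟨·,m+l⟩ is a scalar multiple of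
this combination. -/
theorem stmt3 (d : ℕ) (hd : 1 ≤ d) (m l : Fin d → ℤ) :
    (∀ x : Fin d → ℝ,
      Bop d (smap d m - cmap d l) x + Bop d (cmap d m - smap d l) x
        - Bop d (smap d m) x - Bop d (smap d l) x - Bop d (cmap d m) x
        - Bop d (cmap d l) x
        = 2 * (ipZ d m l : ℝ) * Real.sin (ip d x (m + l))) ∧
    ((ipZ d m l : ℤ) ≠ 0 → ∃ c : ℝ,
      smap d (m + l)
        = c • (Bop d (smap d m - cmap d l) + Bop d (cmap d m - smap d l)
            - Bop d (smap d m) - Bop d (smap d l) - Bop d (cmap d m)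
            - Bop d (cmap d l))) :=
  stmt3_general d m l
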